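/- Let π be a positive density on a finite set Y, r : Y → ℝ, and define Z⁺ = Σ_y π(y)e^{r(y)}, Z⁻ = Σ_y π(y)e^{-r(y)}, π⁺(y) = π(y)e^{r(y)}/Z⁺, π⁻(y) = π(y)e^{-r(y)}/Z⁻, and p₀ = Z⁺Z⁻/(1 + Z⁺Z⁻). Define the mixture μ(a,b) = (1-p₀)·π(a)π(b) + p₀·π⁺(a)π⁻(b) and its symmetrization μ̄(a,b) = (μ(a,b)+μ(b,a))/2. Then for all a, b ∈ Y: μ̄(a,b) / (π(a)π(b)) = 1 / (2·(1 + Z⁺Z⁻)·σ'(r(a)-r(b))), where σ'(z) = 1/((1+e^{-z})(1+e^{z})). -/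

import Mathlib

/-!
With `z = r a - r b`, symmetrizing the tilted term gives
`π⁺(a)π⁻(b) + π⁺(b)π⁻(a) = π(a)π(b)(e^z + e^{-z}) / (Z⁺Z⁻)`, and the mixture weights
`1 - p₀ = 1/(1 + Z⁺Z⁻)`, `p₀ = Z⁺Z⁻/(1 + Z⁺Z⁻)` cancel the normalizer `Z⁺Z⁻`, so
`2 μ̄(a,b) = π(a)π(b)(2 + e^z + e^{-z}) / (1 + Z⁺Z⁻)`.
Finally `2 + e^z + e^{-z} = (1 + e^z)(1 + e^{-z}) = 1/σ'(z)`.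
-/

open scoped BigOperators

noncomputable def sigmoid' (z : ℝ) : ℝ := 1 / ((1 + Real.exp (-z)) * (1 + Real.exp z))

lemma one_div_sigmoid' (z : ℝ) : 1 / sigmoid' z = 2 + Real.exp z + Real.exp (-z) := by
  have h : Real.exp z * Real.exp (-z) = 1 := by rw [← Real.exp_add, add_neg_cancel, Real.exp_zero]
  rw [sigmoid', one_div_one_div]
  linear_combination h

lemma tilted_mul_add_swap (pa pb ra rb c d : ℝ) :
    pa * Real.exp ra / c * (pb * Real.exp (-rb) / d) +
        pb * Real.exp rb / c * (pa * Real.exp (-ra) / d) =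
      pa * pb * (Real.exp (ra - rb) + Real.exp (-(ra - rb))) / (c * d) := by
  rw [sub_eq_add_neg, neg_add, neg_neg, Real.exp_add, Real.exp_add]
  ring

lemma sum_mul_exp_pos {Y : Type*} [Fintype Y] [Nonempty Y] {π : Y → ℝ} (hpos : ∀ y, 0 < π y)
    (f : Y → ℝ) : 0 < ∑ y, π y * Real.exp (f y) :=
  Finset.sum_pos (fun y _ => mul_pos (hpos y) (Real.exp_pos _)) Finset.univ_nonempty

theorem pilaf_density_ratio_general {Y : Type*} [Fintype Y]
    (π : Y → ℝ) (hpos : ∀ y, 0 < π y)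
    (r : Y → ℝ)
    (Zp Zm : ℝ) (hZp : Zp = ∑ y, π y * Real.exp (r y))
    (hZm : Zm = ∑ y, π y * Real.exp (-r y))
    (πp πm : Y → ℝ) (hπp : ∀ y, πp y = π y * Real.exp (r y) / Zp)
    (hπm : ∀ y, πm y = π y * Real.exp (-r y) / Zm)
    (p₀ : ℝ) (hp₀ : p₀ = Zp * Zm / (1 + Zp * Zm))
    (μ : Y → Y → ℝ) (hμ : ∀ a b, μ a b = (1 - p₀) * (π a * π b) + p₀ * (πp a * πm b))
    (μbar : Y → Y → ℝ) (hμbar : ∀ a b, μbar a b = (μ a b + μ b a) / 2) :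
    ∀ a b : Y,
      μbar a b / (π a * π b) =
        1 / (2 * (1 + Zp * Zm) * sigmoid' (r a - r b)) := by
  intro a b
  have : Nonempty Y := ⟨a⟩
  have hZp0 : 0 < Zp := hZp ▸ sum_mul_exp_pos hpos r
  have hZm0 : 0 < Zm := hZm ▸ sum_mul_exp_pos hpos (fun y => -r y)
  have hπa := (hpos a).ne'
  have hπb := (hpos b).ne'
  have hμ_symm : μ a b + μ b a = 2 * (1 - p₀) * (π a * π b) +
      p₀ * (π a * π b * (Real.exp (r a - r b) + Real.exp (-(r a - r b))) / (Zp * Zm)) := by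
    rw [hμ, hμ, hπp, hπp, hπm, hπm, ← tilted_mul_add_swap]
    ring
  have hμbar_eq : μbar a b / (π a * π b) =
      (2 + Real.exp (r a - r b) + Real.exp (-(r a - r b))) / (2 * (1 + Zp * Zm)) := by
    rw [hμbar, hμ_symm, hp₀]
    field_simp
    ring
  rw [hμbar_eq, ← one_div_sigmoid', div_div, mul_comm (sigmoid' _)]

/-- PILAF density-ratio formula: the symmetrized mixture of `π⊗π` and `π⁺⊗π⁻` satisfies
`μ̄(a,b)/(π(a)π(b)) = 1/(2(1+Z⁺Z⁻)σ'(r(a)-r(b)))`. -/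
theorem pilaf_density_ratio {Y : Type*} [Fintype Y]
    (π : Y → ℝ) (hpos : ∀ y, 0 < π y) (hsum : ∑ y, π y = 1)
    (r : Y → ℝ)
    (Zp Zm : ℝ) (hZp : Zp = ∑ y, π y * Real.exp (r y))
    (hZm : Zm = ∑ y, π y * Real.exp (-r y))
    (πp πm : Y → ℝ) (hπp : ∀ y, πp y = π y * Real.exp (r y) / Zp)
    (hπm : ∀ y, πm y = π y * Real.exp (-r y) / Zm)
    (p₀ : ℝ) (hp₀ : p₀ = Zp * Zm / (1 + Zp * Zm))
    (μ : Y → Y → ℝ) (hμ : ∀ a b, μ a b = (1 - p₀) * (π a * π b) + p₀ * (πp a * πm b))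
    (μbar : Y → Y → ℝ) (hμbar : ∀ a b, μbar a b = (μ a b + μ b a) / 2) :
    ∀ a b : Y,
      μbar a b / (π a * π b) =
        1 / (2 * (1 + Zp * Zm) * sigmoid' (r a - r b)) :=
  pilaf_density_ratio_general π hpos r Zp Zm hZp hZm πp πm hπp hπm p₀ hp₀ μ hμ μbar hμbar
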